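/- arXiv:1305.0457 — 2 statements merged into one kernel-verified Lean document; each statement's English description precedes it below -/
import Mathlib

section
/- For every λ ≤ 0, the Fourier multiplier a(D) with symbol a(ξ) = e^{λ⟨ξ⟩}, ⟨ξ⟩ = (1+|ξ|²)^{1/2}, is bounded on L^∞(ℝ^d) with operator norm bounded by a constant K independent of λ: ‖a(D)f‖_{L^∞} ≤ K‖f‖_{L^∞} for all f ∈ L^∞(ℝ^d). -/
/-!
Subordination: the Lévy density `ρ_t(u) = t / (2√π) u^{-3/2} e^{-t²/(4u)}` has Laplace transform
`e^{-t√s}`, so for `t > 0` we have `e^{-t⟨ξ⟩} = ∫₀^∞ ρ_t(u) e^{-u} e^{-u|ξ|²} du`, and the kernel of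
`e^{-t⟨D⟩}` is the superposition `∫₀^∞ ρ_t(u) e^{-u} h_u du` of heat kernels. It is nonnegative with
total mass `e^{-t} ≤ 1`, so convolution with it does not increase sup norms. The Laplace transform
of `ρ_t` reduces to the Gaussian integral through the substitution `w = αv - β/v` of `(0, ∞)` onto
`ℝ`, together with the symmetry `v ↦ (β/α)/v`.

For `λ = 0` the symbol `1` is not integrable in positive dimension, so its inverse Fourier
transform is `0` by convention; in dimension `0` it is `1`.
-/

open MeasureTheory Real Set
open scoped FourierTransform

noncomputable section

section MulSubDiv

variable {α β : ℝ}

lemma hasDerivAt_mul_sub_div {v : ℝ} (hv : v ≠ 0) :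
    HasDerivAt (fun v => α * v - β / v) (α + β / v ^ 2) v := by
  have h := ((hasDerivAt_id' v).const_mul α).sub ((hasDerivAt_inv hv).const_mul β)
  simp only [mul_one, mul_neg, sub_neg_eq_add, ← div_eq_mul_inv] at h
  exact h

lemma strictMonoOn_mul_sub_div (hα : 0 < α) (hβ : 0 ≤ β) :
    StrictMonoOn (fun v => α * v - β / v) (Ioi 0) := by
  intro v hv w hw hvw
  have : β / w ≤ β / v := div_le_div_of_nonneg_left hβ hv hvw.le
  dsimp only
  nlinarith

lemma image_mul_sub_div_Ioi (hα : 0 < α) (hβ : 0 < β) :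
    (fun v => α * v - β / v) '' Ioi 0 = univ := by
  refine eq_univ_of_forall fun w => ?_
  -- the positive root of `α v² - w v - β`
  set r := √(w ^ 2 + 4 * α * β)
  have hr : |w| < r := by
    rw [← sqrt_sq_eq_abs]; exact sqrt_lt_sqrt (sq_nonneg _) (by nlinarith)
  have hr2 : r ^ 2 = w ^ 2 + 4 * α * β := sq_sqrt (by positivity)
  have hwr : 0 < w + r := by linarith [neg_abs_le w]
  have hv : 0 < (w + r) / (2 * α) := by positivity
  refine ⟨(w + r) / (2 * α), hv, ?_⟩
  have hroot : α * ((w + r) / (2 * α)) ^ 2 - w * ((w + r) / (2 * α)) - β = 0 := by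
    field_simp; linear_combination hr2
  field_simp at hroot ⊢
  linear_combination hroot

lemma integrableOn_deriv_mul_exp_neg_mul_sub_div_sq (hα : 0 < α) (hβ : 0 < β) :
    IntegrableOn (fun v => (α + β / v ^ 2) * exp (-(α * v - β / v) ^ 2)) (Ioi 0) := by
  have hg : IntegrableOn (fun w => exp (-w ^ 2)) ((fun v => α * v - β / v) '' Ioi 0) := by
    rw [image_mul_sub_div_Ioi hα hβ, integrableOn_univ]
    simpa using integrable_exp_neg_mul_sq one_pos
  refine ((integrableOn_image_iff_integrableOn_abs_deriv_smul measurableSet_Ioi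
    (fun v hv => (hasDerivAt_mul_sub_div (ne_of_gt hv)).hasDerivWithinAt)
    (strictMonoOn_mul_sub_div hα hβ.le).injOn _).1 hg).congr_fun (fun v hv => ?_) measurableSet_Ioi
  have : 0 < α + β / v ^ 2 := by positivity
  simp [abs_of_pos this]

lemma integral_deriv_mul_exp_neg_mul_sub_div_sq (hα : 0 < α) (hβ : 0 < β) :
    ∫ v in Ioi 0, (α + β / v ^ 2) * exp (-(α * v - β / v) ^ 2) = √π := by
  have h := integral_image_eq_integral_abs_deriv_smul measurableSet_Ioi
    (fun v hv => (hasDerivAt_mul_sub_div (α := α) (β := β) (ne_of_gt hv)).hasDerivWithinAt)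
    (strictMonoOn_mul_sub_div hα hβ.le).injOn (fun w => exp (-w ^ 2))
  rw [image_mul_sub_div_Ioi hα hβ, setIntegral_univ] at h
  have hπ : √π = ∫ w, exp (-w ^ 2) := by simpa using (integral_gaussian 1).symm
  rw [hπ, h]
  refine (setIntegral_congr_fun measurableSet_Ioi fun v hv => ?_)
  have : 0 < α + β / v ^ 2 := by positivity
  simp [abs_of_pos this]

lemma image_mul_inv_Ioi {c : ℝ} (hc : 0 < c) : (fun v => c * v⁻¹) '' Ioi 0 = Ioi 0 := by
  refine Subset.antisymm (image_subset_iff.2 fun v hv => by simp_all) fun w hw => ?_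
  exact ⟨c * w⁻¹, by simp_all, by field_simp⟩

lemma integral_mul_exp_neg_mul_sub_div_sq (hα : 0 < α) (hβ : 0 < β) :
    ∫ v in Ioi 0, α * exp (-(α * v - β / v) ^ 2) =
      ∫ v in Ioi 0, β / v ^ 2 * exp (-(α * v - β / v) ^ 2) := by
  have hc : 0 < β / α := div_pos hβ hα
  -- `v ↦ (β/α)/v` only flips the sign of `α v - β/v`
  have h := integral_image_eq_integral_abs_deriv_smul measurableSet_Ioi
    (fun v hv => ((hasDerivAt_inv (ne_of_gt hv)).const_mul (β / α)).hasDerivWithinAt)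
    (fun x _ y _ h => inv_injective (mul_left_cancel₀ hc.ne' h))
    (fun v => α * exp (-(α * v - β / v) ^ 2))
  rw [image_mul_inv_Ioi hc] at h
  rw [h]
  refine setIntegral_congr_fun measurableSet_Ioi fun v (hv : 0 < v) => ?_
  have hsq : (α * (β / α * v⁻¹) - β / (β / α * v⁻¹)) ^ 2 = (α * v - β / v) ^ 2 := by
    field_simp; ring
  rw [hsq, abs_mul, abs_neg, abs_of_pos hc, abs_of_pos (by positivity), smul_eq_mul]
  field_simp

lemma integral_div_sq_mul_exp_neg_mul_sub_div_sq (hα : 0 < α) (hβ : 0 < β) :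
    ∫ v in Ioi 0, β / v ^ 2 * exp (-(α * v - β / v) ^ 2) = √π / 2 := by
  have hint := integrableOn_deriv_mul_exp_neg_mul_sub_div_sq hα hβ
  have hint₂ : IntegrableOn (fun v => β / v ^ 2 * exp (-(α * v - β / v) ^ 2)) (Ioi 0) := by
    refine hint.mono' (by fun_prop) (ae_of_all _ fun v => ?_)
    rw [norm_of_nonneg (by positivity)]
    gcongr
    linarith
  have hint₁ : IntegrableOn (fun v => α * exp (-(α * v - β / v) ^ 2)) (Ioi 0) :=
    (hint.sub hint₂).congr_fun (fun v _ => by simp only [Pi.sub_apply]; ring) measurableSet_Ioi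
  have h := integral_deriv_mul_exp_neg_mul_sub_div_sq hα hβ
  simp_rw [add_mul] at h
  rw [integral_add hint₁ hint₂, integral_mul_exp_neg_mul_sub_div_sq hα hβ] at h
  linarith

end MulSubDiv

def levyDensity (t u : ℝ) : ℝ := t / (2 * √π) * u ^ (-(3 / 2 : ℝ)) * exp (-(t ^ 2 / (4 * u)))

lemma levyDensity_nonneg {t u : ℝ} (ht : 0 ≤ t) (hu : 0 ≤ u) : 0 ≤ levyDensity t u := by
  unfold levyDensity; positivity

lemma integral_levyDensity_mul_exp {t s : ℝ} (ht : 0 < t) (hs : 0 < s) :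
    ∫ u in Ioi 0, levyDensity t u * exp (-(s * u)) = exp (-(t * √s)) := by
  rw [← integral_comp_rpow_Ioi_of_pos (g := fun u => levyDensity t u * exp (-(s * u))) two_pos]
  have hpt : ∀ v ∈ Ioi (0 : ℝ), (2 * v ^ ((2 : ℝ) - 1)) • (levyDensity t (v ^ (2 : ℝ)) *
      exp (-(s * v ^ (2 : ℝ)))) = 2 / √π * exp (-(t * √s)) *
        (t / 2 / v ^ 2 * exp (-(√s * v - t / 2 / v) ^ 2)) := by
    intro v (hv : 0 < v)
    have hexp : -(t ^ 2 / (4 * v ^ 2)) + -(s * v ^ 2) = -(t * √s) + -(√s * v - t / 2 / v) ^ 2 := by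
      rw [sub_sq, mul_pow, sq_sqrt hs.le]; field_simp; ring
    have hpow : (v ^ (2 : ℝ)) ^ (-(3 / 2 : ℝ)) = (v ^ 3)⁻¹ := by
      rw [← rpow_mul hv.le, ← rpow_natCast, ← rpow_neg hv.le]; norm_num
    rw [levyDensity, hpow, rpow_two, show (2 : ℝ) - 1 = 1 by norm_num, rpow_one, smul_eq_mul,
      mul_assoc _ (exp _), ← exp_add, hexp, exp_add]
    field_simp
  rw [setIntegral_congr_fun measurableSet_Ioi hpt, integral_const_mul,
    integral_div_sq_mul_exp_neg_mul_sub_div_sq (sqrt_pos.2 hs) (half_pos ht)]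
  field_simp

lemma integrableOn_levyDensity_mul_exp {t s : ℝ} (ht : 0 < t) (hs : 0 < s) :
    IntegrableOn (fun u => levyDensity t u * exp (-(s * u))) (Ioi 0) :=
  .of_integral_ne_zero (by rw [integral_levyDensity_mul_exp ht hs]; exact (exp_pos _).ne')

lemma exp_neg_mul_pow_le_factorial {x : ℝ} (hx : 0 ≤ x) (n : ℕ) :
    exp (-x) * x ^ n ≤ n.factorial := by
  have h := pow_div_factorial_le_exp x hx n
  rw [div_le_iff₀ (by positivity)] at h
  rw [exp_neg, inv_mul_le_iff₀ (exp_pos x)]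
  linarith

section Fourier

open Module

variable {V : Type*} [NormedAddCommGroup V] [InnerProductSpace ℝ V]

variable (V) in
def heatKernel (u : ℝ) (y : V) : ℝ :=
  (π / u) ^ (finrank ℝ V / 2 : ℝ) * exp (-(π ^ 2 * ‖y‖ ^ 2 / u))

lemma heatKernel_nonneg {u : ℝ} (hu : 0 ≤ u) (y : V) : 0 ≤ heatKernel V u y := by
  unfold heatKernel; positivity

variable (V) in
def expBracketKernel (t : ℝ) (y : V) : ℝ :=
  ∫ u in Ioi 0, levyDensity t u * exp (-u) * heatKernel V u y

lemma expBracketKernel_nonneg {t : ℝ} (ht : 0 ≤ t) (y : V) : 0 ≤ expBracketKernel V t y :=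
  setIntegral_nonneg measurableSet_Ioi fun u (hu : 0 < u) =>
    mul_nonneg (mul_nonneg (levyDensity_nonneg ht hu.le) (exp_pos _).le)
      (heatKernel_nonneg hu.le y)

variable [FiniteDimensional ℝ V] [MeasurableSpace V] [BorelSpace V]

lemma integrable_exp_neg_mul_sqrt_one_add_norm_sq {t : ℝ} (ht : 0 < t) :
    Integrable (fun ξ : V => exp (-(t * √(1 + ‖ξ‖ ^ 2)))) := by
  set n := finrank ℝ V + 1
  have hdom := (integrable_rpow_neg_one_add_norm_sq (E := V) (μ := volume) (r := n)
    (by simp [n])).const_mul (n.factorial / t ^ n)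
  refine hdom.mono' (by fun_prop) (ae_of_all _ fun ξ => ?_)
  have hX : 0 < √(1 + ‖ξ‖ ^ 2) := by positivity
  have hpow : (1 + ‖ξ‖ ^ 2) ^ (-(n : ℝ) / 2) = (√(1 + ‖ξ‖ ^ 2) ^ n)⁻¹ := by
    rw [sqrt_eq_rpow, ← rpow_mul_natCast (by positivity), ← rpow_neg (by positivity)]
    ring_nf
  rw [norm_of_nonneg (exp_pos _).le, hpow, ← div_eq_mul_inv, div_div, le_div_iff₀ (by positivity),
    ← mul_pow]
  exact exp_neg_mul_pow_le_factorial (mul_pos ht hX).le n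

lemma fourierInv_exp_neg_mul_norm_sq {u : ℝ} (hu : 0 < u) (y : V) :
    𝓕⁻ (fun ξ : V => ((exp (-(u * ‖ξ‖ ^ 2)) : ℝ) : ℂ)) y = heatKernel V u y := by
  have hfun : (fun ξ : V => ((exp (-(u * ‖ξ‖ ^ 2)) : ℝ) : ℂ))
      = fun ξ => Complex.exp (-(u : ℂ) * (‖ξ‖ : ℂ) ^ 2) := by
    ext ξ; push_cast; ring_nf
  rw [hfun, Real.fourierInv_eq_fourier_neg,
    fourier_gaussian_innerProductSpace (by simpa using hu : 0 < (u : ℂ).re), norm_neg, heatKernel]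
  push_cast
  rw [Complex.ofReal_cpow (by positivity)]
  push_cast
  ring_nf

lemma integral_heatKernel {u : ℝ} (hu : 0 < u) : ∫ y, heatKernel V u y = 1 := by
  have hexp : ∀ y : V, exp (-(π ^ 2 * ‖y‖ ^ 2 / u)) = exp (-(π ^ 2 / u) * ‖y‖ ^ 2) := fun y => by
    ring_nf
  simp_rw [heatKernel, hexp]
  rw [integral_const_mul, GaussianFourier.integral_rexp_neg_mul_sq_norm (by positivity),
    ← mul_rpow (by positivity) (by positivity)]
  field_simp
  exact one_rpow _

lemma integrable_heatKernel {u : ℝ} (hu : 0 < u) : Integrable (heatKernel V u) :=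
  .of_integral_ne_zero (by rw [integral_heatKernel hu]; exact one_ne_zero)

lemma integrable_levyDensity_mul_heatKernel {t : ℝ} (ht : 0 < t) :
    Integrable (fun p : V × ℝ => levyDensity t p.2 * exp (-p.2) * heatKernel V p.2 p.1)
      ((volume : Measure V).prod (volume.restrict (Ioi 0))) := by
  refine (integrable_prod_iff' (by unfold levyDensity heatKernel; fun_prop)).2 ⟨?_, ?_⟩
  · filter_upwards [self_mem_ae_restrict measurableSet_Ioi] with u hu
    exact (integrable_heatKernel hu).const_mul _
  · refine (integrableOn_levyDensity_mul_exp ht one_pos).congr_fun (fun u (hu : 0 < u) => ?_)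
      measurableSet_Ioi
    have hnn : ∀ y : V, 0 ≤ levyDensity t u * exp (-u) * heatKernel V u y := fun y =>
      mul_nonneg (mul_nonneg (levyDensity_nonneg ht.le hu.le) (exp_pos _).le)
        (heatKernel_nonneg hu.le y)
    simp only [norm_of_nonneg (hnn _), integral_const_mul, integral_heatKernel hu, one_mul, mul_one]

lemma integrable_expBracketKernel {t : ℝ} (ht : 0 < t) : Integrable (expBracketKernel V t) :=
  (integrable_levyDensity_mul_heatKernel ht).integral_prod_left

lemma integral_expBracketKernel {t : ℝ} (ht : 0 < t) :
    ∫ y, expBracketKernel V t y = exp (-t) := by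
  unfold expBracketKernel
  rw [integral_integral_swap (integrable_levyDensity_mul_heatKernel ht)]
  have h := integral_levyDensity_mul_exp ht one_pos
  simp only [one_mul, sqrt_one, mul_one] at h
  rw [← h]
  refine setIntegral_congr_fun measurableSet_Ioi fun u (hu : 0 < u) => ?_
  simp only [integral_const_mul, integral_heatKernel hu, mul_one]

lemma integrable_fourierChar_mul_levyDensity_mul_exp {t : ℝ} (ht : 0 < t) (y : V) :
    Integrable (fun p : V × ℝ =>
      (𝐞 (inner ℝ p.1 y) : ℂ) * ((levyDensity t p.2 * exp (-((1 + ‖p.1‖ ^ 2) * p.2)) : ℝ) : ℂ))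
      ((volume : Measure V).prod (volume.restrict (Ioi 0))) := by
  have hnorm : ∀ ξ : V, ∀ u ∈ Ioi (0 : ℝ),
      ‖(𝐞 (inner ℝ ξ y) : ℂ) * ((levyDensity t u * exp (-((1 + ‖ξ‖ ^ 2) * u)) : ℝ) : ℂ)‖ =
        levyDensity t u * exp (-((1 + ‖ξ‖ ^ 2) * u)) := fun ξ u (hu : 0 < u) => by
    simp only [norm_mul, Circle.norm_coe, one_mul, Complex.norm_real,
      norm_of_nonneg (mul_nonneg (levyDensity_nonneg ht.le hu.le) (exp_pos _).le)]
  refine (integrable_prod_iff (by unfold levyDensity; fun_prop)).2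
    ⟨ae_of_all _ fun ξ => ?_, ?_⟩
  · refine (integrableOn_levyDensity_mul_exp ht (by positivity : 0 < 1 + ‖ξ‖ ^ 2)).mono'
      (by unfold levyDensity; fun_prop) ?_
    filter_upwards [self_mem_ae_restrict measurableSet_Ioi] with u hu
    exact (hnorm ξ u hu).le
  · refine (integrable_exp_neg_mul_sqrt_one_add_norm_sq (V := V) ht).congr
      (ae_of_all _ fun ξ => ?_)
    dsimp only
    rw [setIntegral_congr_fun measurableSet_Ioi (hnorm ξ),
      integral_levyDensity_mul_exp ht (by positivity)]

lemma fourierInv_exp_neg_mul_sqrt_one_add_norm_sq {t : ℝ} (ht : 0 < t) (y : V) :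
    𝓕⁻ (fun ξ : V => ((exp (-(t * √(1 + ‖ξ‖ ^ 2))) : ℝ) : ℂ)) y = expBracketKernel V t y := by
  set G : V × ℝ → ℂ := fun p =>
    (𝐞 (inner ℝ p.1 y) : ℂ) * ((levyDensity t p.2 * exp (-((1 + ‖p.1‖ ^ 2) * p.2)) : ℝ) : ℂ)
  rw [Real.fourierInv_eq]
  calc ∫ ξ, 𝐞 (inner ℝ ξ y) • ((exp (-(t * √(1 + ‖ξ‖ ^ 2))) : ℝ) : ℂ)
      = ∫ ξ, ∫ u in Ioi 0, G (ξ, u) := integral_congr_ae <| ae_of_all _ fun ξ => by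
        dsimp only
        rw [← integral_levyDensity_mul_exp ht (by positivity : 0 < 1 + ‖ξ‖ ^ 2),
          ← integral_complex_ofReal, Circle.smul_def, smul_eq_mul, ← integral_const_mul]
    _ = ∫ u in Ioi 0, ∫ ξ, G (ξ, u) :=
        integral_integral_swap (integrable_fourierChar_mul_levyDensity_mul_exp ht y)
    _ = ∫ u in Ioi 0, ((levyDensity t u * exp (-u) * heatKernel V u y : ℝ) : ℂ) := by
        refine setIntegral_congr_fun measurableSet_Ioi fun u (hu : 0 < u) => ?_
        have hsplit : ∀ ξ : V, G (ξ, u) = ((levyDensity t u * exp (-u) : ℝ) : ℂ) *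
            𝐞 (inner ℝ ξ y) • ((exp (-(u * ‖ξ‖ ^ 2)) : ℝ) : ℂ) := fun ξ => by
          simp only [G, Circle.smul_def, smul_eq_mul]
          rw [show -((1 + ‖ξ‖ ^ 2) * u) = -u + -(u * ‖ξ‖ ^ 2) by ring, exp_add]
          push_cast
          ring
        simp_rw [hsplit]
        rw [integral_const_mul, ← Real.fourierInv_eq, fourierInv_exp_neg_mul_norm_sq hu]
        push_cast
        ring
    _ = expBracketKernel V t y := integral_ofReal

lemma volume_univ_of_subsingleton [Subsingleton V] : (volume : Measure V) univ = 1 := by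
  rw [← (stdOrthonormalBasis ℝ V).volume_parallelepiped]
  exact congrArg _ (Subsingleton.eq_univ_of_nonempty
    ⟨0, (mem_parallelepiped_iff _ _).2 ⟨0, by simp, by simp⟩⟩).symm

lemma fourierInv_one_eq_zero [Nontrivial V] : 𝓕⁻ (fun _ : V => (1 : ℂ)) = 0 := by
  ext y
  rw [Real.fourierInv_eq]
  refine integral_undef fun h => ?_
  have h1 : Integrable (fun _ : V => (1 : ℝ)) :=
    h.norm.congr (ae_of_all _ fun ξ => by simp)
  rcases integrable_const_iff.1 h1 with h1 | h1
  · exact one_ne_zero h1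
  · exact measure_ne_top (volume : Measure V) univ (measure_univ_of_isAddLeftInvariant _)

lemma norm_integral_fourierInv_one_mul_le {f : V → ℂ} {M : ℝ} (hM : ∀ x, ‖f x‖ ≤ M) (x : V) :
    ‖∫ y, 𝓕⁻ (fun _ : V => (1 : ℂ)) y * f (x - y)‖ ≤ M := by
  rcases subsingleton_or_nontrivial V with hV | hV
  · have : IsProbabilityMeasure (volume : Measure V) := ⟨volume_univ_of_subsingleton⟩
    have h1 : ∀ y : V, 𝓕⁻ (fun _ : V => (1 : ℂ)) y * f (x - y) = f x := fun y => by
      have h0 : ∀ ξ : V, inner ℝ ξ y = 0 := fun ξ => by rw [Subsingleton.elim ξ 0, inner_zero_left]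
      simp [Real.fourierInv_eq, h0, Subsingleton.elim (x - y) x]
    simpa [h1] using hM x
  · simpa [fourierInv_one_eq_zero] using (norm_nonneg _).trans (hM x)

end Fourier

lemma norm_integral_ofReal_mul_le {α : Type*} [MeasurableSpace α] {μ : Measure α} {k : α → ℝ}
    {g : α → ℂ} {M : ℝ} (hk0 : ∀ y, 0 ≤ k y) (hk : Integrable k μ) (hg : ∀ y, ‖g y‖ ≤ M) :
    ‖∫ y, (k y : ℂ) * g y ∂μ‖ ≤ (∫ y, k y ∂μ) * M := by
  rw [← integral_mul_const]
  refine norm_integral_le_of_norm_le (hk.mul_const M) (ae_of_all _ fun y => ?_)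
  rw [norm_mul, Complex.norm_real, norm_of_nonneg (hk0 y)]
  exact mul_le_mul_of_nonneg_left (hg y) (hk0 y)

/-- **Uniform `L^∞` boundedness of the multipliers `e^{λ⟨D⟩}`, `λ ≤ 0`.**
For every `λ ≤ 0`, the Fourier multiplier `a(D)` with symbol `a(ξ) = e^{λ⟨ξ⟩}`,
`⟨ξ⟩ = (1+|ξ|²)^{1/2}`, realized as convolution with the inverse Fourier transform of the
symbol, is bounded on `L^∞(ℝ^d)` with operator norm bounded by a constant `K` independent
of `λ`: `‖a(D)f‖_{L^∞} ≤ K ‖f‖_{L^∞}`. -/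
theorem exp_bracket_multiplier_Linfty_bounded (d : ℕ) :
    ∃ K > 0, ∀ l : ℝ, l ≤ 0 →
      ∀ (f : EuclideanSpace ℝ (Fin d) → ℂ) (M : ℝ), Measurable f → (∀ x, ‖f x‖ ≤ M) →
      ∀ x : EuclideanSpace ℝ (Fin d),
        ‖∫ y, 𝓕⁻ (fun ξ : EuclideanSpace ℝ (Fin d) =>
            ((Real.exp (l * Real.sqrt (1 + ‖ξ‖ ^ 2)) : ℝ) : ℂ)) y * f (x - y)‖ ≤ K * M := by
  refine ⟨1, one_pos, fun l hl f M _ hM x => ?_⟩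
  rcases hl.lt_or_eq with hl | rfl
  · obtain ⟨t, ht, rfl⟩ : ∃ t, 0 < t ∧ l = -t := ⟨-l, neg_pos.2 hl, (neg_neg l).symm⟩
    simp_rw [neg_mul, fourierInv_exp_neg_mul_sqrt_one_add_norm_sq ht]
    calc _ ≤ (∫ y, expBracketKernel _ t y) * M :=
          norm_integral_ofReal_mul_le (expBracketKernel_nonneg ht.le)
            (integrable_expBracketKernel ht) fun y => hM (x - y)
      _ ≤ 1 * M := by
          rw [integral_expBracketKernel ht]
          gcongr
          · exact (norm_nonneg _).trans (hM x)
          · exact exp_le_one_iff.2 (by linarith)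
  · simpa using norm_integral_fourierInv_one_mul_le hM x
end
end

section
/- Consider a classical solution (η, v, P) of the free-boundary incompressible irrotational Euler equations in a canal Ω(t) = {(x₁,x₂,y) ∈ (0,1)×ℝ×ℝ : b(x) < y < η(t,x)}, with vertical walls Γ₂ = {x₁ ∈ {0,1}}, satisfying v·n = 0 on the walls, P = 0 on the free surface Σ(t) = {y = η(t,x)}, η(t,x) ≥ b(x) + h for some h > 0, and with continuous nonvanishing Taylor coefficient a(t,x) = −∂_y P(t,x,η(t,x)). Then at every point of Σ(t) ∩ Γ₂ the free surface meets the wall at a right angle: ∂_{x₁}η(t, x₁, x₂) = 0 for x₁ ∈ {0,1}. -/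
/-!
On the open wall `x₁ = ε` the condition `v₁ = 0` kills the normal component of `∂ₜv + (v·∇)v`,
which only involves tangential derivatives of `v₁`; the Euler equation then gives `∂ₓ₁P = 0`
there, and by continuity of `∇P` also where the wall meets the free surface. Differentiating
`P(t, x, η(t, x)) = 0` in `x₁` (one-sidedly, since `x₁ ∈ {0, 1}`) gives
`∂ₓ₁P + ∂ₓ₁η ∂_yP = 0`, and the Taylor sign condition `∂_yP ≠ 0` forces `∂ₓ₁η = 0`.
-/

open Set Filter Topology

theorem fderiv_apply_eq_zero_of_forall_add_smul_eq_zero {E F : Type*}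
    [NormedAddCommGroup E] [NormedSpace ℝ E] [NormedAddCommGroup F] [NormedSpace ℝ F]
    {f : E → F} {p e : E} {S : Set ℝ} (hf : DifferentiableAt ℝ f p)
    (hS : UniqueDiffWithinAt ℝ S 0) (hS₀ : 0 ∈ S) (h : ∀ s ∈ S, f (p + s • e) = 0) :
    fderiv ℝ f p e = 0 :=
  hS.eq_deriv _ (hf.hasFDerivAt.hasLineDerivAt e).hasDerivWithinAt <|
    (hasDerivWithinAt_const 0 S 0).congr_of_mem h hS₀

theorem fderiv_apply_eq_zero_of_forall_level_eq_zero {E F G : Type*}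
    [NormedAddCommGroup E] [NormedSpace ℝ E] [NormedAddCommGroup F] [NormedSpace ℝ F]
    [AddCommGroup G] [Module ℝ G]
    {f : E → F} {ℓ : E →ₗ[ℝ] G} {U : Set E} {p e : E} (hU : IsOpen U) (hpU : p ∈ U)
    (hf₀ : ∀ q ∈ U, ℓ q = ℓ p → f q = 0) (hf : DifferentiableAt ℝ f p) (he : ℓ e = 0) :
    fderiv ℝ f p e = 0 :=
  fderiv_apply_eq_zero_of_forall_add_smul_eq_zero (S := (fun s : ℝ => p + s • e) ⁻¹' U) hf
    ((hU.preimage (by fun_prop)).uniqueDiffWithinAt (by simpa)) (by simpa)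
    fun _ hs => hf₀ _ hs (by simp [he])

theorem fderiv_comp_graph_apply {P : ℝ × (ℝ × ℝ × ℝ) → ℝ} {η : ℝ × (ℝ × ℝ) → ℝ}
    {x : ℝ × (ℝ × ℝ)} (hP : DifferentiableAt ℝ P (x.1, (x.2.1, x.2.2, η x)))
    (hη : DifferentiableAt ℝ η x) (e : ℝ × (ℝ × ℝ)) :
    fderiv ℝ (fun x => P (x.1, (x.2.1, x.2.2, η x))) x e =
      fderiv ℝ P (x.1, (x.2.1, x.2.2, η x)) (e.1, (e.2.1, e.2.2, 0)) +
        fderiv ℝ η x e * fderiv ℝ P (x.1, (x.2.1, x.2.2, η x)) (0, (0, 0, 1)) := by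
  have hgraph : HasFDerivAt (fun x : ℝ × (ℝ × ℝ) => (x.1, (x.2.1, x.2.2, η x))) _ x :=
    hasFDerivAt_fst.prodMk (hasFDerivAt_snd.fst.prodMk (hasFDerivAt_snd.snd.prodMk hη.hasFDerivAt))
  have hsplit : (e.1, (e.2.1, e.2.2, fderiv ℝ η x e)) =
      (e.1, (e.2.1, e.2.2, 0)) + fderiv ℝ η x e • ((0 : ℝ), ((0 : ℝ), (0 : ℝ), (1 : ℝ))) := by
    simp
  calc fderiv ℝ (fun x => P (x.1, (x.2.1, x.2.2, η x))) x e
      = fderiv ℝ P (x.1, (x.2.1, x.2.2, η x)) (e.1, (e.2.1, e.2.2, fderiv ℝ η x e)) :=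
        DFunLike.congr_fun (hP.hasFDerivAt.comp x hgraph).fderiv e
    _ = _ := by rw [hsplit, map_add, map_smul, smul_eq_mul]

section Canal

variable {T : ℝ} {b : ℝ × ℝ → ℝ} {η : ℝ × (ℝ × ℝ) → ℝ}

-- points are `(t, (x₁, x₂, y))`
def openFluidDomain (T : ℝ) (b : ℝ × ℝ → ℝ) (η : ℝ × (ℝ × ℝ) → ℝ) :
    Set (ℝ × (ℝ × ℝ × ℝ)) :=
  {q | q.1 ∈ Ioo 0 T ∧ b (q.2.1, q.2.2.1) < q.2.2.2 ∧ q.2.2.2 < η (q.1, (q.2.1, q.2.2.1))}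

theorem isOpen_openFluidDomain (hb : Continuous b) (hη : Continuous η) :
    IsOpen (openFluidDomain T b η) :=
  (isOpen_Ioo.preimage continuous_fst).and <|
    (isOpen_lt (by fun_prop) (by fun_prop)).and (isOpen_lt (by fun_prop) (by fun_prop))

theorem fderiv_pressure_normal_eq_zero_of_wall {g ε : ℝ} {V : ℝ × (ℝ × ℝ × ℝ) → ℝ × ℝ × ℝ}
    {P : ℝ × (ℝ × ℝ × ℝ) → ℝ} (hb : Continuous b) (hη : Continuous η)
    (hwall : ∀ t ∈ Icc 0 T, ∀ x₂ y : ℝ, b (ε, x₂) ≤ y → y ≤ η (t, (ε, x₂)) →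
      (V (t, (ε, x₂, y))).1 = 0)
    {p : ℝ × (ℝ × ℝ × ℝ)} (hp : p ∈ openFluidDomain T b η) (hpε : p.2.1 = ε)
    (hV : DifferentiableAt ℝ V p)
    (hEuler : fderiv ℝ V p (1, V p) +
        (fderiv ℝ P p (0, (1, 0, 0)), fderiv ℝ P p (0, (0, 1, 0)), fderiv ℝ P p (0, (0, 0, 1)))
        = (0, 0, -g)) :
    fderiv ℝ P p (0, (1, 0, 0)) = 0 := by
  have hV₁ : ∀ q ∈ openFluidDomain T b η, q.2.1 = p.2.1 → (V q).1 = 0 := by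
    rintro ⟨t, x₁, x₂, y⟩ ⟨ht, hby, hyη⟩ hq
    obtain rfl : x₁ = ε := hq.trans hpε
    exact hwall t (Ioo_subset_Icc_self ht) x₂ y hby.le hyη.le
  have htangential : fderiv ℝ (fun q => (V q).1) p (1, V p) = 0 :=
    fderiv_apply_eq_zero_of_forall_level_eq_zero
      (ℓ := (LinearMap.fst ℝ ℝ (ℝ × ℝ)).comp (LinearMap.snd ℝ ℝ (ℝ × ℝ × ℝ)))
      (isOpen_openFluidDomain hb hη) hp hV₁ hV.fst (hV₁ p hp rfl)
  have hEuler₁ := congrArg Prod.fst hEuler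
  simp only [fderiv.fst hV, ContinuousLinearMap.comp_apply,
    ContinuousLinearMap.coe_fst'] at htangential
  simpa [htangential] using hEuler₁

theorem corner_mem_closure_wall {h : ℝ} (hT : 0 < T) (hh : 0 < h) (hη : Continuous η)
    (hsep : ∀ t x, b x + h ≤ η (t, x)) {t : ℝ} (ht : t ∈ Icc 0 T) (ε x₂ : ℝ) :
    (t, (ε, x₂, η (t, (ε, x₂)))) ∈ closure {q ∈ openFluidDomain T b η | q.2.1 = ε} := by
  -- a path leaving the corner into the open wall, ending at `(T / 2, (ε, x₂, η - h))`
  set γ : ℝ → ℝ × (ℝ × ℝ × ℝ) := fun l =>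
    (t + l * (T / 2 - t), (ε, x₂, η (t + l * (T / 2 - t), (ε, x₂)) - l * h))
  have hγ : Continuous γ := by fun_prop
  refine mem_closure_of_tendsto (f := γ) (b := 𝓝[>] (0 : ℝ)) ?_ ?_
  · simpa [γ] using (hγ.tendsto 0).mono_left nhdsWithin_le_nhds
  · filter_upwards [Ioo_mem_nhdsGT one_pos] with l ⟨hl₀, hl₁⟩
    have := hsep (t + l * (T / 2 - t)) (ε, x₂)
    refine ⟨⟨⟨?_, ?_⟩, ?_, ?_⟩, rfl⟩ <;> simp only [γ] <;> nlinarith [ht.1, ht.2]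

end Canal

theorem canal_right_angle_general
    (T g h : ℝ) (hT : 0 < T) (hh : 0 < h)
    (η : ℝ × (ℝ × ℝ) → ℝ) (b : ℝ × ℝ → ℝ)
    (V : ℝ × (ℝ × ℝ × ℝ) → ℝ × ℝ × ℝ) (P : ℝ × (ℝ × ℝ × ℝ) → ℝ)
    (hηC1 : ContDiff ℝ 1 η) (hbC : Continuous b)
    (hVC1 : ContDiff ℝ 1 V) (hPC1 : ContDiff ℝ 1 P)
    (hsep : ∀ t x, b x + h ≤ η (t, x))
    -- the closed space-time fluid domain
    (D : Set (ℝ × (ℝ × ℝ × ℝ)))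
    (hD : D = {p : ℝ × (ℝ × ℝ × ℝ) | p.1 ∈ Icc 0 T ∧ p.2.1 ∈ Icc (0 : ℝ) 1 ∧
      b (p.2.1, p.2.2.1) ∈ Iic p.2.2.2 ∧ p.2.2.2 ≤ η (p.1, (p.2.1, p.2.2.1))})
    -- Euler equation: ∂_t v + (v·∇)v + ∇P = −g e_y on the closed domain
    (hEuler : ∀ p ∈ D,
      fderiv ℝ V p (1, V p) +
        (fderiv ℝ P p (0, (1, 0, 0)), fderiv ℝ P p (0, (0, 1, 0)), fderiv ℝ P p (0, (0, 0, 1)))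
        = (0, 0, -g))
    -- solid wall condition on the vertical walls x₁ = 0 and x₁ = 1
    (hwall : ∀ t ∈ Icc 0 T, ∀ ε ∈ ({0, 1} : Set ℝ), ∀ x₂ y : ℝ,
      b (ε, x₂) ≤ y → y ≤ η (t, (ε, x₂)) → (V (t, (ε, x₂, y))).1 = 0)
    -- dynamic condition: P = 0 on the free surface
    (hsurf : ∀ t ∈ Icc 0 T, ∀ x₁ ∈ Icc (0 : ℝ) 1, ∀ x₂ : ℝ,
      P (t, (x₁, x₂, η (t, (x₁, x₂)))) = 0)
    -- nonvanishing Taylor coefficient a = −∂_y P on the free surface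
    (hTaylor : ∀ t ∈ Icc 0 T, ∀ x₁ ∈ Icc (0 : ℝ) 1, ∀ x₂ : ℝ,
      fderiv ℝ P (t, (x₁, x₂, η (t, (x₁, x₂)))) (0, (0, 0, 1)) ≠ 0) :
    ∀ t ∈ Icc 0 T, ∀ ε ∈ ({0, 1} : Set ℝ), ∀ x₂ : ℝ,
      fderiv ℝ η (t, (ε, x₂)) (0, (1, 0)) = 0 := by
  intro t ht ε hε x₂
  have hε₀₁ : ε ∈ Icc (0 : ℝ) 1 := by rcases hε with rfl | rfl <;> simp
  have hP := hPC1.differentiable one_ne_zero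
  have hη := hηC1.differentiable one_ne_zero
  have hnormal : fderiv ℝ P (t, (ε, x₂, η (t, (ε, x₂)))) (0, (1, 0, 0)) = 0 := by
    refine (isClosed_eq ((hPC1.continuous_fderiv one_ne_zero).clm_apply continuous_const)
      continuous_const).closure_subset_iff.2 ?_
      (corner_mem_closure_wall hT hh hηC1.continuous hsep ht ε x₂)
    rintro q ⟨hq, hqε⟩
    refine fderiv_pressure_normal_eq_zero_of_wall hbC hηC1.continuous
      (fun t ht => hwall t ht ε hε) hq hqε (hVC1.differentiable one_ne_zero q) (hEuler q ?_)
    rw [hD]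
    exact ⟨Ioo_subset_Icc_self hq.1, hqε ▸ hε₀₁, hq.2.1.le, hq.2.2.le⟩
  have hsurface :
      fderiv ℝ (fun x => P (x.1, (x.2.1, x.2.2, η x))) (t, (ε, x₂)) (0, (1, 0)) = 0 := by
    have h₀ : (0 : ℝ) ∈ Icc (-ε) (1 - ε) := ⟨by linarith [hε₀₁.1], by linarith [hε₀₁.2]⟩
    refine fderiv_apply_eq_zero_of_forall_add_smul_eq_zero (by fun_prop)
      (uniqueDiffOn_Icc (by linarith) 0 h₀) h₀ fun s hs => ?_
    simpa using hsurf t ht (ε + s) ⟨by linarith [hs.1], by linarith [hs.2]⟩ x₂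
  rw [fderiv_comp_graph_apply (hP _) (hη _)] at hsurface
  simpa [hnormal, hTaylor t ht ε hε₀₁ x₂] using hsurface

/-- **Right angle between the free surface and the vertical walls of the canal.**
Let `(η, v, P)` be a classical (`C¹`) solution on `[0,T]` of the free-boundary
incompressible irrotational Euler equations in the canal
`Ω(t) = {(x₁,x₂,y) : 0 < x₁ < 1, b(x) < y < η(t,x)}`, i.e.
`∂_t v + (v·∇)v + ∇P = −g e_y`, `div v = 0`, `curl v = 0` in the (closed) fluid domain,
with the solid wall condition `v₁ = 0` on the vertical walls `x₁ ∈ {0,1}`, the dynamic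
condition `P = 0` on the free surface `y = η(t,x)`, separation `η ≥ b + h` with `h > 0`,
and a nonvanishing Taylor coefficient `a = −∂_y P ≠ 0` on the free surface.
Then for all `t ∈ [0,T]` the free surface meets the walls at a right angle:
`∂_{x₁} η(t, x₁, x₂) = 0` for `x₁ ∈ {0,1}`. -/
theorem canal_right_angle
    (T g h : ℝ) (hT : 0 < T) (hh : 0 < h)
    (η : ℝ × (ℝ × ℝ) → ℝ) (b : ℝ × ℝ → ℝ)
    (V : ℝ × (ℝ × ℝ × ℝ) → ℝ × ℝ × ℝ) (P : ℝ × (ℝ × ℝ × ℝ) → ℝ)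
    (hηC1 : ContDiff ℝ 1 η) (hbC : Continuous b)
    (hVC1 : ContDiff ℝ 1 V) (hPC1 : ContDiff ℝ 1 P)
    (hsep : ∀ t x, b x + h ≤ η (t, x))
    -- the closed space-time fluid domain
    (D : Set (ℝ × (ℝ × ℝ × ℝ)))
    (hD : D = {p : ℝ × (ℝ × ℝ × ℝ) | p.1 ∈ Icc 0 T ∧ p.2.1 ∈ Icc (0 : ℝ) 1 ∧
      b (p.2.1, p.2.2.1) ∈ Iic p.2.2.2 ∧ p.2.2.2 ≤ η (p.1, (p.2.1, p.2.2.1))})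
    -- Euler equation: ∂_t v + (v·∇)v + ∇P = −g e_y on the closed domain
    (hEuler : ∀ p ∈ D,
      fderiv ℝ V p (1, V p) +
        (fderiv ℝ P p (0, (1, 0, 0)), fderiv ℝ P p (0, (0, 1, 0)), fderiv ℝ P p (0, (0, 0, 1)))
        = (0, 0, -g))
    -- incompressibility: div v = 0
    (hdiv : ∀ p ∈ D,
      (fderiv ℝ V p (0, (1, 0, 0))).1 + (fderiv ℝ V p (0, (0, 1, 0))).2.1 +
        (fderiv ℝ V p (0, (0, 0, 1))).2.2 = 0)
    -- irrotationality: curl v = 0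
    (hcurl : ∀ p ∈ D,
      (fderiv ℝ V p (0, (1, 0, 0))).2.1 = (fderiv ℝ V p (0, (0, 1, 0))).1 ∧
      (fderiv ℝ V p (0, (1, 0, 0))).2.2 = (fderiv ℝ V p (0, (0, 0, 1))).1 ∧
      (fderiv ℝ V p (0, (0, 1, 0))).2.2 = (fderiv ℝ V p (0, (0, 0, 1))).2.1)
    -- solid wall condition on the vertical walls x₁ = 0 and x₁ = 1
    (hwall : ∀ t ∈ Icc 0 T, ∀ ε ∈ ({0, 1} : Set ℝ), ∀ x₂ y : ℝ,
      b (ε, x₂) ≤ y → y ≤ η (t, (ε, x₂)) → (V (t, (ε, x₂, y))).1 = 0)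
    -- dynamic condition: P = 0 on the free surface
    (hsurf : ∀ t ∈ Icc 0 T, ∀ x₁ ∈ Icc (0 : ℝ) 1, ∀ x₂ : ℝ,
      P (t, (x₁, x₂, η (t, (x₁, x₂)))) = 0)
    -- nonvanishing Taylor coefficient a = −∂_y P on the free surface
    (hTaylor : ∀ t ∈ Icc 0 T, ∀ x₁ ∈ Icc (0 : ℝ) 1, ∀ x₂ : ℝ,
      fderiv ℝ P (t, (x₁, x₂, η (t, (x₁, x₂)))) (0, (0, 0, 1)) ≠ 0) :
    ∀ t ∈ Icc 0 T, ∀ ε ∈ ({0, 1} : Set ℝ), ∀ x₂ : ℝ,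
      fderiv ℝ η (t, (ε, x₂)) (0, (1, 0)) = 0 :=
  canal_right_angle_general T g h hT hh η b V P hηC1 hbC hVC1 hPC1 hsep D hD hEuler hwall hsurf
    hTaylor
end
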